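/- Let M be a random n × n Boolean matrix whose rows are independent uniform r-subsets of [n] with r = 2^(3w) and w ≤ 10^(−3) log n. Then for sufficiently large n, P[R(M) ≤ w] ≤ 1/10, where R denotes public-coin randomized communication complexity with error 1/3. -/

import Mathlib

/-- A deterministic communication protocol on inputs from `Fin n × Fin n`:
a binary tree where each internal node is assigned to a player (`true` = Alice,
`false` = Bob) and labeled by a Boolean function of that player's input,
and each leaf is labeled by an output bit. -/
inductive Protocol (n : ℕ) : Type
  | leaf : Bool → Protocol n
  | node : Bool → (Fin n → Bool) → Protocol n → Protocol n → Protocol n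

namespace Protocol

/-- The output of a deterministic protocol on input `(i, j)`. -/
def eval {n : ℕ} : Protocol n → Fin n → Fin n → Bool
  | leaf b, _, _ => b
  | node p f l r, i, j =>
      if f (if p then i else j) then eval r i j else eval l i j

/-- The depth (communication cost) of a protocol. -/
def depth {n : ℕ} : Protocol n → ℕ
  | leaf _ => 0
  | node _ _ l r => max (depth l) (depth r) + 1

end Protocol

/-- The probability that a public-coin randomized protocol (a distribution over
deterministic protocols) outputs the correct value `M i j` on input `(i, j)`. -/
noncomputable def succProb {n : ℕ} (μ : PMF (Protocol n)) (M : Fin n → Fin n → Bool)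
    (i j : Fin n) : ℝ :=
  (μ.toOuterMeasure {π | π.eval i j = M i j}).toReal

/-- Public-coin randomized communication complexity with error `1/3`. -/
noncomputable def Rcc {n : ℕ} (M : Fin n → Fin n → Bool) : ℕ :=
  sInf {c | ∃ μ : PMF (Protocol n), (∀ π ∈ μ.support, π.depth ≤ c) ∧
    ∀ i j, (2 : ℝ) / 3 ≤ succProb μ M i j}

/-- Deterministic communication complexity. -/
noncomputable def Dcc {n : ℕ} (M : Fin n → Fin n → Bool) : ℕ :=
  sInf {c | ∃ π : Protocol n, π.depth ≤ c ∧ ∀ i j, π.eval i j = M i j}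


/-- The sample space for a random `n × n` Boolean matrix whose rows are independent
uniformly random `r`-subsets of `[n]`: a choice of an `r`-subset for each row. -/
abbrev Omega (n r : ℕ) := Fin n → {s : Finset (Fin n) // s.card = r}

/-- The Boolean matrix determined by a sample point: `M i j = 1` iff `j` lies in the
`r`-subset chosen for row `i`. -/
def sample {n r : ℕ} (ω : Omega n r) (i j : Fin n) : Bool := decide (j ∈ (ω i).1)

/-- The probability of an event under the uniform distribution on `Omega n r`. -/
noncomputable def prob (n r : ℕ) (P : Omega n r → Prop) : ℝ :=
  (Nat.card {ω : Omega n r // P ω} : ℝ) / (Fintype.card (Omega n r))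

/-- Expectation of a real random variable under the uniform distribution on `Omega n r`. -/
noncomputable def expect (n r : ℕ) (X : Omega n r → ℝ) : ℝ :=
  (∑ ω : Omega n r, X ω) / (Fintype.card (Omega n r))

lemma hl_log (p : ℝ) (hp0 : 0 ≤ p) (hp1 : p ≤ 1) :
    ∀ t : ℝ, Real.log (1 - p + p * Real.exp t) ≤ p * t + t ^ 2 / 8 := by
  have hD : ∀ t : ℝ, 0 < 1 - p + p * Real.exp t := by
    intro t
    rcases eq_or_lt_of_le hp0 with h | h
    · simp [← h]
    · have := Real.exp_pos t
      nlinarith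
  set ψ : ℝ → ℝ := fun t => p * Real.exp t / (1 - p + p * Real.exp t) with hψdef
  have hψ01 : ∀ t, 0 ≤ ψ t ∧ ψ t ≤ 1 := by
    intro t
    have h1 := hD t
    have h2 := Real.exp_pos t
    constructor
    · positivity
    · rw [div_le_one h1]; nlinarith
  have hψd : ∀ t, HasDerivAt ψ (ψ t * (1 - ψ t)) t := by
    intro t
    have h1 := hD t
    have hnum : HasDerivAt (fun t => p * Real.exp t) (p * Real.exp t) t :=
      (Real.hasDerivAt_exp t).const_mul p
    have hden : HasDerivAt (fun t => 1 - p + p * Real.exp t) (p * Real.exp t) t := by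
      simpa using ((Real.hasDerivAt_exp t).const_mul p).const_add (1 - p)
    have := hnum.div hden h1.ne'
    refine this.congr_deriv ?_
    simp only [hψdef]
    field_simp
  have hψlip : ∀ t : ℝ, |ψ t - p| ≤ |t| / 4 := by
    intro t
    have hlip : LipschitzWith (1/4 : NNReal) ψ := by
      apply lipschitzWith_of_nnnorm_deriv_le (fun x => (hψd x).differentiableAt)
      intro x
      have h01 := hψ01 x
      have hd : deriv ψ x = ψ x * (1 - ψ x) := (hψd x).deriv
      simp only [hd]
      rw [← NNReal.coe_le_coe, coe_nnnorm, Real.norm_eq_abs,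
        abs_of_nonneg (by nlinarith [h01.1, h01.2] : (0:ℝ) ≤ ψ x * (1 - ψ x))]
      norm_num
      nlinarith [h01.1, h01.2, sq_nonneg (ψ x - 1/2)]
    have hψ0 : ψ 0 = p := by simp [hψdef]
    have := hlip.dist_le_mul t 0
    rw [Real.dist_eq, Real.dist_eq, hψ0] at this
    simp only [sub_zero] at this
    calc |ψ t - p| ≤ 1/4 * |t| := by exact_mod_cast this
    _ = |t| / 4 := by ring
  set F : ℝ → ℝ := fun t => p * t + t ^ 2 / 8 - Real.log (1 - p + p * Real.exp t) with hFdef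
  have hFd : ∀ t, HasDerivAt F (p + t / 4 - ψ t) t := by
    intro t
    have hden : HasDerivAt (fun t => 1 - p + p * Real.exp t) (p * Real.exp t) t := by
      simpa using ((Real.hasDerivAt_exp t).const_mul p).const_add (1 - p)
    have hlog : HasDerivAt (fun t => Real.log (1 - p + p * Real.exp t)) (ψ t) t := by
      simpa [hψdef] using hden.log (hD t).ne'
    have h1 : HasDerivAt (fun t : ℝ => p * t + t ^ 2 / 8) (p + t / 4) t := by
      have := ((hasDerivAt_id t).const_mul p).add ((hasDerivAt_pow 2 t).div_const 8)
      refine this.congr_deriv ?_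
      push_cast
      ring
    exact h1.sub hlog
  have hF0 : F 0 = 0 := by simp [hFdef]
  have key : ∀ t : ℝ, 0 ≤ F t := by
    intro t
    rcases le_total 0 t with ht | ht
    · have hmono : MonotoneOn F (Set.Ici (0:ℝ)) := by
        apply monotoneOn_of_deriv_nonneg (convex_Ici 0)
        · exact fun x _ => ((hFd x).continuousAt).continuousWithinAt
        · exact fun x _ => ((hFd x).differentiableAt).differentiableWithinAt
        · intro x hx
          rw [interior_Ici] at hx
          have hx0 : (0:ℝ) < x := hx
          rw [(hFd x).deriv]
          have h2 := (abs_le.mp (hψlip x)).2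
          rw [abs_of_pos hx0] at h2
          linarith
      have := hmono (Set.self_mem_Ici) (Set.mem_Ici.mpr ht) ht
      linarith [hF0 ▸ this]
    · have hanti : AntitoneOn F (Set.Iic (0:ℝ)) := by
        apply antitoneOn_of_deriv_nonpos (convex_Iic 0)
        · exact fun x _ => ((hFd x).continuousAt).continuousWithinAt
        · exact fun x _ => ((hFd x).differentiableAt).differentiableWithinAt
        · intro x hx
          rw [interior_Iic] at hx
          have hx0 : x < (0:ℝ) := hx
          rw [(hFd x).deriv]
          have h2 := (abs_le.mp (hψlip x)).1
          rw [abs_of_neg hx0] at h2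
          linarith
      have := hanti (Set.mem_Iic.mpr ht) (Set.self_mem_Iic) ht
      linarith [hF0 ▸ this]
  intro t
  have := key t
  simp only [hFdef] at this
  linarith

lemma hoeffding_pt {p : ℝ} (hp0 : 0 ≤ p) (hp1 : p ≤ 1) (t : ℝ) :
    p * Real.exp ((1 - p) * t) + (1 - p) * Real.exp (-(p * t)) ≤ Real.exp (t ^ 2 / 8) := by
  have hD : 0 < 1 - p + p * Real.exp t := by
    rcases eq_or_lt_of_le hp0 with h | h
    · simp [← h]
    · have := Real.exp_pos t
      nlinarith
  have h1 : 1 - p + p * Real.exp t ≤ Real.exp (p * t + t ^ 2 / 8) := by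
    have := hl_log p hp0 hp1 t
    calc 1 - p + p * Real.exp t = Real.exp (Real.log (1 - p + p * Real.exp t)) :=
      (Real.exp_log hD).symm
    _ ≤ _ := Real.exp_le_exp.mpr this
  have h2 : p * Real.exp ((1 - p) * t) + (1 - p) * Real.exp (-(p * t))
      = Real.exp (-(p * t)) * (1 - p + p * Real.exp t) := by
    have e1 : (1 - p) * t = -(p * t) + t := by ring
    rw [e1, Real.exp_add]
    ring
  rw [h2]
  calc Real.exp (-(p * t)) * (1 - p + p * Real.exp t)
      ≤ Real.exp (-(p * t)) * Real.exp (p * t + t ^ 2 / 8) :=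
        mul_le_mul_of_nonneg_left h1 (Real.exp_pos _).le
  _ = Real.exp (t ^ 2 / 8) := by rw [← Real.exp_add]; ring_nf

open Finset

variable {α : Type*} [DecidableEq α]

lemma sum_powersetCard_succ (U : Finset α) (r : ℕ) (f : Finset α → ℝ) :
    ((r+1 : ℕ) : ℝ) * ∑ s ∈ U.powersetCard (r+1), f s
      = ∑ x ∈ U, ∑ s ∈ (U.erase x).powersetCard r, f (insert x s) := by
  have inner : ∀ x ∈ U, ∑ s ∈ (U.erase x).powersetCard r, f (insert x s)
      = ∑ t ∈ (U.powersetCard (r+1)).filter (fun t => x ∈ t), f t := by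
    intro x hx
    apply Finset.sum_nbij' (i := fun s => insert x s) (j := fun t => t.erase x)
    · intro s hs
      rw [mem_powersetCard] at hs
      have hxs : x ∉ s := fun h => (mem_erase.mp (hs.1 h)).1 rfl
      rw [mem_filter, mem_powersetCard]
      refine ⟨⟨?_, ?_⟩, mem_insert_self x s⟩
      · intro y hy
        rcases mem_insert.mp hy with h | h
        · exact h ▸ hx
        · exact (erase_subset x U) (hs.1 h)
      · rw [card_insert_of_notMem hxs, hs.2]
    · intro t ht
      rw [mem_filter, mem_powersetCard] at ht
      rw [mem_powersetCard]
      constructor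
      · exact erase_subset_erase x ht.1.1
      · simp [card_erase_of_mem ht.2, ht.1.2]
    · intro s hs
      rw [mem_powersetCard] at hs
      have hxs : x ∉ s := fun h => (mem_erase.mp (hs.1 h)).1 rfl
      exact erase_insert hxs
    · intro t ht
      rw [mem_filter] at ht
      exact insert_erase ht.2
    · intro s _
      rfl
  rw [Finset.sum_congr rfl inner]
  simp only [Finset.sum_filter]
  rw [Finset.sum_comm]
  rw [Finset.mul_sum]
  apply Finset.sum_congr rfl
  intro t ht
  rw [mem_powersetCard] at ht
  have : ∑ x ∈ U, (if x ∈ t then f t else 0) = ∑ x ∈ U.filter (fun x => x ∈ t), f t := by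
    rw [Finset.sum_filter]
  rw [this, Finset.sum_const, Finset.filter_mem_eq_inter,
    Finset.inter_eq_right.mpr ht.1, ht.2, nsmul_eq_mul]


/-- key counting step -/
lemma insert_inter_card (x : α) (s B : Finset α) (hxs : x ∉ s) :
    ((insert x s ∩ B).card : ℝ)
      = ((s ∩ (B.erase x)).card : ℝ) + (if x ∈ B then (1:ℝ) else 0) := by
  have hsB : s ∩ B.erase x = s ∩ B := by
    rw [Finset.inter_erase, Finset.erase_eq_of_notMem
      (fun h => hxs (Finset.mem_inter.mp h).1)]
  by_cases hxB : x ∈ B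
  · rw [Finset.insert_inter_of_mem hxB, hsB,
      Finset.card_insert_of_notMem (fun h => hxs (Finset.mem_inter.mp h).1)]
    simp [hxB]
  · rw [Finset.insert_inter_of_notMem hxB, hsB]
    simp [hxB]

/-- the two-value average bound -/
lemma two_point_bound (lam : ℝ) (n m r : ℕ) (hmn : m ≤ n) (hrn : r + 1 ≤ n) :
    (m:ℝ) * Real.exp (lam * (1 + r * ((m:ℝ)-1) / ((n:ℝ)-1) - ((r:ℝ)+1) * m / n))
      + ((n:ℝ) - m) * Real.exp (lam * ((r:ℝ) * m / ((n:ℝ)-1) - ((r:ℝ)+1) * m / n))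
      ≤ (n:ℝ) * Real.exp (lam ^ 2 / 8) := by
  have hn1 : 1 ≤ n := le_trans (by omega) hrn
  have hnR : (0:ℝ) < (n:ℝ) := by exact_mod_cast hn1
  have hmn' : (m:ℝ) ≤ (n:ℝ) := by exact_mod_cast hmn
  have hm0 : (0:ℝ) ≤ (m:ℝ) := Nat.cast_nonneg m
  -- abbreviations
  have key : ∀ d1 d0 g0 : ℝ, d1 - d0 = g0 → (m:ℝ) * d1 + ((n:ℝ) - m) * d0 = 0 →
      0 ≤ g0 → g0 ≤ 1 →
      (m:ℝ) * Real.exp (lam * d1) + ((n:ℝ) - m) * Real.exp (lam * d0)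
        ≤ (n:ℝ) * Real.exp (lam ^ 2 / 8) := by
    intro d1 d0 g0 hB hA hg0 hg1
    have hd0' : d0 = -((m:ℝ)/n * g0) := by
      have h1 : (n:ℝ) * d0 = -((m:ℝ) * g0) := by nlinarith
      field_simp
      linarith
    have hd1' : d1 = (1 - (m:ℝ)/n) * g0 := by
      have : d1 = d0 + g0 := by linarith
      rw [this, hd0']; ring
    have hp0 : 0 ≤ (m:ℝ)/n := by positivity
    have hp1 : (m:ℝ)/n ≤ 1 := by rw [div_le_one hnR]; exact hmn'
    have hh := hoeffding_pt hp0 hp1 (lam * g0)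
    have hmon : Real.exp ((lam * g0) ^ 2 / 8) ≤ Real.exp (lam ^ 2 / 8) := by
      apply Real.exp_le_exp.mpr
      have hg2 : g0 ^ 2 ≤ 1 := by nlinarith
      have : (lam * g0) ^ 2 ≤ lam ^ 2 := by nlinarith [sq_nonneg lam]
      linarith
    have e1 : lam * d1 = (1 - (m:ℝ)/n) * (lam * g0) := by rw [hd1']; ring
    have e0 : lam * d0 = -((m:ℝ)/n * (lam * g0)) := by rw [hd0']; ring
    rw [e1, e0]
    calc (m:ℝ) * Real.exp ((1 - (m:ℝ)/n) * (lam * g0))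
          + ((n:ℝ) - m) * Real.exp (-((m:ℝ)/n * (lam * g0)))
        = (n:ℝ) * ((m:ℝ)/n * Real.exp ((1 - (m:ℝ)/n) * (lam * g0))
            + (1 - (m:ℝ)/n) * Real.exp (-((m:ℝ)/n * (lam * g0)))) := by
          field_simp
          try ring
      _ ≤ (n:ℝ) * Real.exp ((lam * g0) ^ 2 / 8) := mul_le_mul_of_nonneg_left hh hnR.le
      _ ≤ (n:ℝ) * Real.exp (lam ^ 2 / 8) := mul_le_mul_of_nonneg_left hmon hnR.le
  apply key _ _ (1 - (r:ℝ)/((n:ℝ)-1))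
  · rcases Nat.eq_zero_or_pos r with hr0 | hr1
    · subst hr0; push_cast; ring
    · have hn2 : 2 ≤ n := by omega
      have hne : ((n:ℝ) - 1) ≠ 0 := by
        have : (2:ℝ) ≤ (n:ℝ) := by exact_mod_cast hn2
        linarith
      field_simp
      ring
  · rcases Nat.eq_zero_or_pos r with hr0 | hr1
    · subst hr0
      push_cast
      field_simp
      ring
    · have hn2 : 2 ≤ n := by omega
      have hne : ((n:ℝ) - 1) ≠ 0 := by
        have : (2:ℝ) ≤ (n:ℝ) := by exact_mod_cast hn2
        linarith
      field_simp
      ring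
  · rcases Nat.eq_zero_or_pos r with hr0 | hr1
    · subst hr0; norm_num
    · have hn2 : 2 ≤ n := by omega
      have h2 : (2:ℝ) ≤ (n:ℝ) := by exact_mod_cast hn2
      have hrn' : (r:ℝ) + 1 ≤ (n:ℝ) := by exact_mod_cast hrn
      have : (r:ℝ)/((n:ℝ)-1) ≤ 1 := by
        rw [div_le_one (by linarith)]
        linarith
      linarith
  · have : 0 ≤ (r:ℝ)/((n:ℝ)-1) := by
      rcases Nat.eq_zero_or_pos r with hr0 | hr1
      · subst hr0; norm_num
      · have hn2 : 2 ≤ n := by omega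
        have h2 : (2:ℝ) ≤ (n:ℝ) := by exact_mod_cast hn2
        exact div_nonneg (Nat.cast_nonneg r) (by linarith)
    linarith

/-- Hypergeometric MGF bound. -/
lemma hg_mgf (lam : ℝ) : ∀ (r : ℕ) (U B : Finset α), B ⊆ U →
    ∑ s ∈ U.powersetCard r,
        Real.exp (lam * (((s ∩ B).card : ℝ) - r * B.card / U.card))
      ≤ (U.card.choose r : ℝ) * Real.exp (lam ^ 2 * r / 8) := by
  intro r
  induction r with
  | zero =>
    intro U B hBU
    simp
  | succ r ih =>
    intro U B hBU
    by_cases hrn : U.card < r + 1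
    · rw [Finset.powersetCard_eq_empty.mpr hrn, Finset.sum_empty]
      positivity
    push_neg at hrn
    have hn1 : 1 ≤ U.card := le_trans (by omega) hrn
    have hmn : B.card ≤ U.card := Finset.card_le_card hBU
    have hdecomp := sum_powersetCard_succ U r
      (fun s => Real.exp (lam * (((s ∩ B).card : ℝ) - ((r:ℝ)+1) * B.card / U.card)))
    have hinner : ∀ x ∈ U, ∑ s ∈ (U.erase x).powersetCard r,
        Real.exp (lam * (((insert x s ∩ B).card : ℝ) - ((r:ℝ)+1) * B.card / U.card))
        ≤ Real.exp (lam * ((if x ∈ B then (1:ℝ) else 0)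
              + r * ((B.erase x).card : ℝ) / (((U.card : ℝ)) - 1)
              - ((r:ℝ)+1) * B.card / U.card))
          * (((U.card-1).choose r : ℝ) * Real.exp (lam ^ 2 * r / 8)) := by
      intro x hx
      have hcard : (U.erase x).card = U.card - 1 := Finset.card_erase_of_mem hx
      have hcardR : ((U.erase x).card : ℝ) = (U.card : ℝ) - 1 := by
        rw [hcard, Nat.cast_sub hn1]; norm_num
      have hstep : ∀ s ∈ (U.erase x).powersetCard r,
          Real.exp (lam * (((insert x s ∩ B).card : ℝ) - ((r:ℝ)+1) * B.card / U.card))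
            = Real.exp (lam * ((if x ∈ B then (1:ℝ) else 0)
                + r * ((B.erase x).card : ℝ) / (((U.card : ℝ)) - 1)
                - ((r:ℝ)+1) * B.card / U.card)) *
              Real.exp (lam * (((s ∩ (B.erase x)).card : ℝ)
                - r * ((B.erase x).card : ℝ) / ((U.erase x).card : ℝ))) := by
        intro s hs
        rw [Finset.mem_powersetCard] at hs
        have hxs : x ∉ s := fun h => (Finset.mem_erase.mp (hs.1 h)).1 rfl
        rw [← Real.exp_add]
        congr 1
        rw [insert_inter_card x s B hxs, hcardR]
        ring
      rw [Finset.sum_congr rfl hstep, ← Finset.mul_sum]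
      apply mul_le_mul_of_nonneg_left _ (Real.exp_pos _).le
      have := ih (U.erase x) (B.erase x) (Finset.erase_subset_erase x hBU)
      rw [hcard, Nat.cast_sub hn1, Nat.cast_one] at this
      rw [hcardR]
      exact this
    have hsum1 : ∑ x ∈ U, ∑ s ∈ (U.erase x).powersetCard r,
          Real.exp (lam * (((insert x s ∩ B).card : ℝ) - ((r:ℝ)+1) * B.card / U.card))
        ≤ (∑ x ∈ U, Real.exp (lam * ((if x ∈ B then (1:ℝ) else 0)
              + r * ((B.erase x).card : ℝ) / (((U.card : ℝ)) - 1)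
              - ((r:ℝ)+1) * B.card / U.card)))
          * (((U.card-1).choose r : ℝ) * Real.exp (lam ^ 2 * r / 8)) := by
      rw [Finset.sum_mul]
      exact Finset.sum_le_sum hinner
    have hsplit : ∑ x ∈ U, Real.exp (lam * ((if x ∈ B then (1:ℝ) else 0)
              + r * ((B.erase x).card : ℝ) / (((U.card : ℝ)) - 1)
              - ((r:ℝ)+1) * B.card / U.card))
        = (B.card : ℝ) * Real.exp (lam * (1 + r * ((B.card:ℝ)-1) / ((U.card:ℝ)-1)
              - ((r:ℝ)+1) * B.card / U.card))
          + ((U.card:ℝ) - B.card) * Real.exp (lam * ((r:ℝ) * B.card / ((U.card:ℝ)-1)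
              - ((r:ℝ)+1) * B.card / U.card)) := by
      rw [← Finset.sum_sdiff hBU]
      have h1 : ∀ x ∈ U \ B, Real.exp (lam * ((if x ∈ B then (1:ℝ) else 0)
              + r * ((B.erase x).card : ℝ) / (((U.card : ℝ)) - 1)
              - ((r:ℝ)+1) * B.card / U.card))
          = Real.exp (lam * ((r:ℝ) * B.card / ((U.card:ℝ)-1) - ((r:ℝ)+1) * B.card / U.card)) := by
        intro x hx
        rw [Finset.mem_sdiff] at hx
        rw [if_neg hx.2, Finset.erase_eq_of_notMem hx.2]
        norm_num
      have h2 : ∀ x ∈ B, Real.exp (lam * ((if x ∈ B then (1:ℝ) else 0)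
              + r * ((B.erase x).card : ℝ) / (((U.card : ℝ)) - 1)
              - ((r:ℝ)+1) * B.card / U.card))
          = Real.exp (lam * (1 + r * ((B.card:ℝ)-1) / ((U.card:ℝ)-1)
              - ((r:ℝ)+1) * B.card / U.card)) := by
        intro x hx
        have hm1 : 1 ≤ B.card := Finset.card_pos.mpr ⟨x, hx⟩
        rw [if_pos hx, Finset.card_erase_of_mem hx, Nat.cast_sub hm1]
        norm_num
      rw [Finset.sum_congr rfl h1, Finset.sum_congr rfl h2, Finset.sum_const, Finset.sum_const,
        Finset.card_sdiff_of_subset hBU, nsmul_eq_mul, nsmul_eq_mul, Nat.cast_sub hmn]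
      ring
    have htp := two_point_bound lam U.card B.card r hmn hrn
    have hchoose : (U.card:ℝ) * ((U.card-1).choose r : ℝ)
        = ((r:ℝ)+1) * (U.card.choose (r+1) : ℝ) := by
      obtain ⟨n', hn'⟩ := Nat.exists_eq_add_of_le hn1
      rw [hn']
      have e : 1 + n' - 1 = n' := by omega
      rw [e]
      have h : (1 + n') * n'.choose r = (1 + n').choose (r+1) * (r+1) := by
        rw [Nat.add_comm 1 n']
        simpa [Nat.succ_eq_add_one] using Nat.add_one_mul_choose_eq n' r
      have h' := congrArg (fun k : ℕ => (k : ℝ)) h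
      push_cast at h' ⊢
      linarith
    have hpos : (0:ℝ) < (r:ℝ)+1 := by positivity
    have hexp : Real.exp (lam^2/8) * Real.exp (lam ^ 2 * r / 8)
        = Real.exp (lam ^ 2 * ((r:ℕ)+1 : ℕ) / 8) := by
      rw [← Real.exp_add]
      congr 1
      push_cast
      ring
    apply le_of_mul_le_mul_left _ hpos
    have ecast : ((r+1 : ℕ) : ℝ) = (r:ℝ)+1 := by push_cast; ring
    calc ((r:ℝ)+1) * ∑ s ∈ U.powersetCard (r+1),
            Real.exp (lam * (((s ∩ B).card : ℝ) - ((r+1:ℕ):ℝ) * B.card / U.card))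
        = ∑ x ∈ U, ∑ s ∈ (U.erase x).powersetCard r,
            Real.exp (lam * (((insert x s ∩ B).card : ℝ) - ((r:ℝ)+1) * B.card / U.card)) := by
          rw [← hdecomp, ecast]
      _ ≤ _ := hsum1
      _ = ((B.card : ℝ) * Real.exp (lam * (1 + r * ((B.card:ℝ)-1) / ((U.card:ℝ)-1)
              - ((r:ℝ)+1) * B.card / U.card))
          + ((U.card:ℝ) - B.card) * Real.exp (lam * ((r:ℝ) * B.card / ((U.card:ℝ)-1)
              - ((r:ℝ)+1) * B.card / U.card)))
          * (((U.card-1).choose r : ℝ) * Real.exp (lam ^ 2 * r / 8)) := by rw [hsplit]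
      _ ≤ ((U.card:ℝ) * Real.exp (lam ^ 2 / 8))
          * (((U.card-1).choose r : ℝ) * Real.exp (lam ^ 2 * r / 8)) := by
          apply mul_le_mul_of_nonneg_right htp
          positivity
      _ = ((U.card:ℝ) * ((U.card-1).choose r : ℝ))
          * (Real.exp (lam ^ 2 / 8) * Real.exp (lam ^ 2 * r / 8)) := by ring
      _ = ((r:ℝ)+1) * ((U.card.choose (r+1) : ℝ) * Real.exp (lam ^ 2 * ((r+1:ℕ)) / 8)) := by
          rw [hchoose, hexp]
          ring

-- exact protocol
def exactP {n : ℕ} (M : Fin n → Fin n → Bool) : ℕ → Protocol n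
  | 0 => .leaf false
  | k+1 => .node false (fun j => decide (j.val = k))
      (exactP M k)
      (.node true (fun i => if h : k < n then M i ⟨k, h⟩ else false) (.leaf false) (.leaf true))

lemma exactP_eval {n : ℕ} (M : Fin n → Fin n → Bool) :
    ∀ k (i j : Fin n), j.val < k → (exactP M k).eval i j = M i j := by
  intro k
  induction k with
  | zero => intro i j hj; omega
  | succ k ih =>
    intro i j hj
    by_cases h : j.val = k
    · have hkn : k < n := h ▸ j.isLt
      have hje : j = ⟨k, hkn⟩ := Fin.ext h
      subst hje
      cases hM : M i ⟨k, hkn⟩ <;>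
        simp [exactP, Protocol.eval, hkn, hM]
    · have : j.val < k := by omega
      simp only [exactP, Protocol.eval]
      rw [if_neg (by simp [h])]
      exact ih i j this

lemma exists_exactP {n : ℕ} (M : Fin n → Fin n → Bool) :
    ∃ π : Protocol n, ∀ i j, π.eval i j = M i j :=
  ⟨exactP M n, fun i j => exactP_eval M n i j j.isLt⟩

lemma succProb_eq {n : ℕ} (μ : PMF (Protocol n)) (M : Fin n → Fin n → Bool) (i j : Fin n) :
    succProb μ M i j = ∑' π : Protocol n,
      (if π.eval i j = M i j then (μ π).toReal else 0) := by
  unfold succProb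
  rw [PMF.toOuterMeasure_apply, ENNReal.tsum_toReal_eq (fun π => ?_)]
  · congr 1
    funext π
    rw [Set.indicator_apply]
    by_cases h : π.eval i j = M i j
    · rw [if_pos h, if_pos (Set.mem_setOf_eq ▸ h)]
    · rw [if_neg h, if_neg (by simpa using h), ENNReal.toReal_zero]
  · exact ne_top_of_le_ne_top (PMF.apply_ne_top μ π) (Set.indicator_apply_le' (fun _ => le_rfl) (fun _ => zero_le))

lemma mass_summable {n : ℕ} (μ : PMF (Protocol n)) :
    Summable (fun π : Protocol n => (μ π).toReal) := by
  apply ENNReal.summable_toReal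
  rw [μ.tsum_coe]
  exact ENNReal.one_ne_top

lemma mass_tsum {n : ℕ} (μ : PMF (Protocol n)) :
    ∑' π : Protocol n, (μ π).toReal = 1 := by
  rw [← ENNReal.tsum_toReal_eq (fun π => PMF.apply_ne_top μ π), μ.tsum_coe, ENNReal.toReal_one]

lemma Rcc_elim {n w : ℕ} {M : Fin n → Fin n → Bool} (hR : Rcc M ≤ w) :
    ∃ μ : PMF (Protocol n), (∀ π ∈ μ.support, π.depth ≤ w) ∧
      ∀ i j, (2:ℝ)/3 ≤ succProb μ M i j := by
  obtain ⟨π₀, hπ₀⟩ := exists_exactP M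
  have hmem : π₀.depth ∈ {c | ∃ μ : PMF (Protocol n), (∀ π ∈ μ.support, π.depth ≤ c) ∧
      ∀ i j, (2 : ℝ) / 3 ≤ succProb μ M i j} := by
    refine ⟨PMF.pure π₀, ?_, ?_⟩
    · intro π hπ
      rw [PMF.support_pure, Set.mem_singleton_iff] at hπ
      rw [hπ]
    · intro i j
      unfold succProb
      rw [PMF.toOuterMeasure_pure_apply]
      rw [if_pos (by exact hπ₀ i j)]
      norm_num
  have hne : {c | ∃ μ : PMF (Protocol n), (∀ π ∈ μ.support, π.depth ≤ c) ∧
      ∀ i j, (2 : ℝ) / 3 ≤ succProb μ M i j}.Nonempty := ⟨_, hmem⟩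
  have := Nat.sInf_mem hne
  obtain ⟨μ, h1, h2⟩ := this
  exact ⟨μ, fun π hπ => le_trans (h1 π hπ) hR, h2⟩

/-- averaging: from a randomized protocol to a deterministic one good on average -/
lemma exists_good_protocol {n w : ℕ} {M : Fin n → Fin n → Bool} (hR : Rcc M ≤ w)
    (ν : Fin n × Fin n → ℝ) (hν0 : ∀ p, 0 ≤ ν p) (hν1 : ∑ p : Fin n × Fin n, ν p = 1) :
    ∃ π : Protocol n, π.depth ≤ w ∧
      (2:ℝ)/3 ≤ ∑ p : Fin n × Fin n, ν p * (if π.eval p.1 p.2 = M p.1 p.2 then 1 else 0) := by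
  obtain ⟨μ, hdep, hsucc⟩ := Rcc_elim hR
  by_contra hcon
  push_neg at hcon
  set q : Protocol n → ℝ :=
    fun π => ∑ p : Fin n × Fin n, ν p * (if π.eval p.1 p.2 = M p.1 p.2 then 1 else 0) with hq
  -- q values lie in a finite set
  have hqval : ∀ π : Protocol n, q π ∈
      (Finset.univ.powerset.image (fun T : Finset (Fin n × Fin n) => ∑ p ∈ T, ν p)) := by
    intro π
    rw [Finset.mem_image]
    refine ⟨Finset.univ.filter (fun p => π.eval p.1 p.2 = M p.1 p.2),
      Finset.mem_powerset.mpr (Finset.filter_subset _ _), ?_⟩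
    rw [hq, Finset.sum_filter]
    apply Finset.sum_congr rfl
    intro p _
    split <;> simp
  set V := (Finset.univ.powerset.image
      (fun T : Finset (Fin n × Fin n) => ∑ p ∈ T, ν p)).filter (fun v => v < 2/3) with hV
  have hVne : (0:ℝ) ∈ V := by
    rw [hV, Finset.mem_filter]
    constructor
    · rw [Finset.mem_image]
      exact ⟨∅, by simp, by simp⟩
    · norm_num
  set c : ℝ := V.max' ⟨0, hVne⟩ with hc
  have hc0 : 0 ≤ c := Finset.le_max' V 0 hVne
  have hclt : c < 2/3 := (Finset.mem_filter.mp (V.max'_mem ⟨0, hVne⟩)).2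
  have hqle : ∀ π ∈ μ.support, q π ≤ c := by
    intro π hπ
    apply Finset.le_max'
    rw [hV, Finset.mem_filter]
    exact ⟨hqval π, hcon π (hdep π hπ)⟩
  -- q π ∈ [0,1]
  have hq01 : ∀ π, 0 ≤ q π ∧ q π ≤ 1 := by
    intro π
    constructor
    · apply Finset.sum_nonneg
      intro p _
      have := hν0 p
      split <;> simp <;> linarith
    · rw [← hν1]
      apply Finset.sum_le_sum
      intro p _
      have := hν0 p
      split <;> simp <;> linarith
  -- chain
  have hexp : ∀ p : Fin n × Fin n, succProb μ M p.1 p.2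
      = ∑' π, (if π.eval p.1 p.2 = M p.1 p.2 then (μ π).toReal else 0) :=
    fun p => succProb_eq μ M p.1 p.2
  have hsummand : ∀ p : Fin n × Fin n,
      Summable (fun π : Protocol n => ν p * (if π.eval p.1 p.2 = M p.1 p.2 then (μ π).toReal else 0)) := by
    intro p
    apply Summable.mul_left
    apply (mass_summable μ).of_nonneg_of_le
    · intro π; split
      · exact ENNReal.toReal_nonneg
      · exact le_rfl
    · intro π; split
      · exact le_rfl
      · exact ENNReal.toReal_nonneg
  have step1 : (2:ℝ)/3 ≤ ∑ p : Fin n × Fin n, ν p * succProb μ M p.1 p.2 := by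
    calc (2:ℝ)/3 = ∑ p : Fin n × Fin n, ν p * (2/3) := by
          rw [← Finset.sum_mul, hν1, one_mul]
      _ ≤ _ := by
          apply Finset.sum_le_sum
          intro p _
          exact mul_le_mul_of_nonneg_left (hsucc p.1 p.2) (hν0 p)
  have step2 : ∑ p : Fin n × Fin n, ν p * succProb μ M p.1 p.2
      = ∑' π : Protocol n, (μ π).toReal * q π := by
    have e1 : ∀ p : Fin n × Fin n, ν p * succProb μ M p.1 p.2
        = ∑' π : Protocol n, ν p * (if π.eval p.1 p.2 = M p.1 p.2 then (μ π).toReal else 0) := by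
      intro p
      rw [hexp p, tsum_mul_left]
    rw [Finset.sum_congr rfl (fun p _ => e1 p), ← Summable.tsum_finsetSum (fun p _ => hsummand p)]
    congr 1
    funext π
    rw [hq, Finset.mul_sum]
    apply Finset.sum_congr rfl
    intro p _
    split <;> ring
  have hsum2 : Summable (fun π : Protocol n => (μ π).toReal * q π) := by
    apply (mass_summable μ).of_nonneg_of_le
    · intro π
      exact mul_nonneg ENNReal.toReal_nonneg (hq01 π).1
    · intro π
      calc (μ π).toReal * q π ≤ (μ π).toReal * 1 :=
            mul_le_mul_of_nonneg_left (hq01 π).2 ENNReal.toReal_nonneg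
        _ = (μ π).toReal := mul_one _
  have step3 : ∑' π : Protocol n, (μ π).toReal * q π ≤ c := by
    calc ∑' π : Protocol n, (μ π).toReal * q π
        ≤ ∑' π : Protocol n, (μ π).toReal * c := by
          apply Summable.tsum_le_tsum _ hsum2 ((mass_summable μ).mul_right c)
          intro π
          by_cases hπ : π ∈ μ.support
          · exact mul_le_mul_of_nonneg_left (hqle π hπ) ENNReal.toReal_nonneg
          · rw [PMF.mem_support_iff] at hπ
            push_neg at hπ
            simp [hπ]
      _ = c := by rw [tsum_mul_right, mass_tsum, one_mul]
  linarith [step1, step2 ▸ step1, step3]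

lemma protocol_disc {n : ℕ} (ε : Fin n → Fin n → ℝ) (D : ℝ)
    (hD : ∀ A B : Finset (Fin n), |∑ i ∈ A, ∑ j ∈ B, ε i j| ≤ D) :
    ∀ (π : Protocol n) (A B : Finset (Fin n)),
      |∑ i ∈ A, ∑ j ∈ B, (if π.eval i j then (1:ℝ) else -1) * ε i j|
        ≤ 2 ^ π.depth * D := by
  have hD0 : 0 ≤ D := le_trans (abs_nonneg _) (hD ∅ ∅)
  intro π
  induction π with
  | leaf b =>
    intro A B
    cases b
    · have e : ∀ i ∈ A, ∑ j ∈ B, (if (Protocol.leaf false : Protocol n).eval i j then (1:ℝ) else -1) * ε i j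
          = -∑ j ∈ B, ε i j := by
        intro i _
        rw [← Finset.sum_neg_distrib]
        apply Finset.sum_congr rfl
        intro j _
        simp [Protocol.eval]
      rw [Finset.sum_congr rfl e, Finset.sum_neg_distrib, abs_neg]
      simpa [Protocol.depth] using hD A B
    · have e : ∀ i ∈ A, ∑ j ∈ B, (if (Protocol.leaf true : Protocol n).eval i j then (1:ℝ) else -1) * ε i j
          = ∑ j ∈ B, ε i j := by
        intro i _
        apply Finset.sum_congr rfl
        intro j _
        simp [Protocol.eval]
      rw [Finset.sum_congr rfl e]
      simpa [Protocol.depth] using hD A B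
  | node p f l r ihl ihr =>
    intro A B
    have hdl : (2:ℝ) ^ l.depth ≤ 2 ^ (max l.depth r.depth) :=
      pow_le_pow_right₀ one_le_two (le_max_left _ _)
    have hdr : (2:ℝ) ^ r.depth ≤ 2 ^ (max l.depth r.depth) :=
      pow_le_pow_right₀ one_le_two (le_max_right _ _)
    have hdepth : (2:ℝ) ^ (Protocol.node p f l r).depth = 2 * 2 ^ (max l.depth r.depth) := by
      show (2:ℝ) ^ (max l.depth r.depth + 1) = _
      ring
    cases p
    · -- Bob speaks: split columns
      have e : ∀ i ∈ A, ∑ j ∈ B, (if (Protocol.node false f l r).eval i j then (1:ℝ) else -1) * ε i j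
          = ∑ j ∈ B.filter (fun j => f j = true), (if r.eval i j then (1:ℝ) else -1) * ε i j
            + ∑ j ∈ B.filter (fun j => ¬ (f j = true)), (if l.eval i j then (1:ℝ) else -1) * ε i j := by
        intro i _
        rw [← Finset.sum_filter_add_sum_filter_not B (fun j => f j = true)]
        congr 1
        · apply Finset.sum_congr rfl
          intro j hj
          rw [Finset.mem_filter] at hj
          have : (Protocol.node false f l r).eval i j = r.eval i j := by
            simp [Protocol.eval, hj.2]
          rw [this]
        · apply Finset.sum_congr rfl
          intro j hj
          rw [Finset.mem_filter] at hj
          have : (Protocol.node false f l r).eval i j = l.eval i j := by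
            simp [Protocol.eval, hj.2]
          rw [this]
      rw [Finset.sum_congr rfl e, Finset.sum_add_distrib]
      calc |_ + _| ≤ |∑ i ∈ A, ∑ j ∈ B.filter (fun j => f j = true), (if r.eval i j then (1:ℝ) else -1) * ε i j|
            + |∑ i ∈ A, ∑ j ∈ B.filter (fun j => ¬ (f j = true)), (if l.eval i j then (1:ℝ) else -1) * ε i j| :=
          abs_add_le _ _
        _ ≤ 2 ^ r.depth * D + 2 ^ l.depth * D := add_le_add (ihr A _) (ihl A _)
        _ ≤ 2 ^ (max l.depth r.depth) * D + 2 ^ (max l.depth r.depth) * D :=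
          add_le_add (mul_le_mul_of_nonneg_right hdr hD0) (mul_le_mul_of_nonneg_right hdl hD0)
        _ = 2 ^ (Protocol.node false f l r).depth * D := by rw [hdepth]; ring
    · -- Alice speaks: split rows
      have e : ∑ i ∈ A, ∑ j ∈ B, (if (Protocol.node true f l r).eval i j then (1:ℝ) else -1) * ε i j
          = ∑ i ∈ A.filter (fun i => f i = true), ∑ j ∈ B, (if r.eval i j then (1:ℝ) else -1) * ε i j
            + ∑ i ∈ A.filter (fun i => ¬ (f i = true)), ∑ j ∈ B, (if l.eval i j then (1:ℝ) else -1) * ε i j := by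
        rw [← Finset.sum_filter_add_sum_filter_not A (fun i => f i = true)]
        congr 1
        · apply Finset.sum_congr rfl
          intro i hi
          rw [Finset.mem_filter] at hi
          apply Finset.sum_congr rfl
          intro j _
          have : (Protocol.node true f l r).eval i j = r.eval i j := by
            simp [Protocol.eval, hi.2]
          rw [this]
        · apply Finset.sum_congr rfl
          intro i hi
          rw [Finset.mem_filter] at hi
          apply Finset.sum_congr rfl
          intro j _
          have : (Protocol.node true f l r).eval i j = l.eval i j := by
            simp [Protocol.eval, hi.2]
          rw [this]
      rw [e]
      calc |_ + _| ≤ |∑ i ∈ A.filter (fun i => f i = true), ∑ j ∈ B, (if r.eval i j then (1:ℝ) else -1) * ε i j|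
            + |∑ i ∈ A.filter (fun i => ¬ (f i = true)), ∑ j ∈ B, (if l.eval i j then (1:ℝ) else -1) * ε i j| :=
          abs_add_le _ _
        _ ≤ 2 ^ r.depth * D + 2 ^ l.depth * D := add_le_add (ihr _ B) (ihl _ B)
        _ ≤ 2 ^ (max l.depth r.depth) * D + 2 ^ (max l.depth r.depth) * D :=
          add_le_add (mul_le_mul_of_nonneg_right hdr hD0) (mul_le_mul_of_nonneg_right hdl hD0)
        _ = 2 ^ (Protocol.node true f l r).depth * D := by rw [hdepth]; ring

/-- From small `Rcc` to a large-discrepancy rectangle. -/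
lemma disc_of_Rcc {n r w : ℕ} (hr1 : 1 ≤ r) (hrn : r < n) (ω : Omega n r)
    (h : Rcc (sample ω) ≤ w) :
    ∃ A B : Finset (Fin n), 1/(3 * 2^w) ≤
      |∑ i ∈ A, ∑ j ∈ B,
        (if j ∈ (ω i).1 then (1:ℝ)/(2*n*r) else -(1/(2*n*((n:ℝ)-r))))| := by
  have hn1 : 1 ≤ n := by omega
  have hnR : (0:ℝ) < n := by
    have : 0 < n := by omega
    exact_mod_cast this
  have hrR : (0:ℝ) < r := by exact_mod_cast hr1
  have hnrR : (0:ℝ) < (n:ℝ) - r := by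
    have : (r:ℝ) < n := by exact_mod_cast hrn
    linarith
  set ν : Fin n × Fin n → ℝ := fun p =>
    if p.2 ∈ (ω p.1).1 then 1/(2*n*r) else 1/(2*n*((n:ℝ)-r)) with hν
  have hν0 : ∀ p, 0 ≤ ν p := by
    intro p
    rw [hν]
    dsimp only
    split <;> positivity
  have hrow : ∀ i : Fin n, ∑ j : Fin n, ν (i, j) = 1/(n:ℝ) := by
    intro i
    have e0 : ∀ j : Fin n, ν (i, j)
        = if j ∈ (ω i).1 then 1/(2*(n:ℝ)*r) else 1/(2*(n:ℝ)*((n:ℝ)-r)) := fun j => rfl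
    rw [Finset.sum_congr rfl (fun j _ => e0 j),
      ← Finset.sum_filter_add_sum_filter_not Finset.univ (fun j => j ∈ (ω i).1)]
    have e1 : Finset.univ.filter (fun j => j ∈ (ω i).1) = (ω i).1 := by
      ext j; simp
    have e2 : Finset.univ.filter (fun j => ¬ (j ∈ (ω i).1)) = ((ω i).1)ᶜ := by
      ext j; simp
    rw [Finset.sum_congr e1 (fun j hj => if_pos (by simpa using hj)),
      Finset.sum_congr e2 (fun j hj => if_neg (by simpa using hj)),
      Finset.sum_const, Finset.sum_const, (ω i).2, Finset.card_compl, (ω i).2,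
      nsmul_eq_mul, nsmul_eq_mul]
    rw [Fintype.card_fin, Nat.cast_sub hrn.le]
    field_simp
    ring
  have hν1 : ∑ p : Fin n × Fin n, ν p = 1 := by
    rw [Fintype.sum_prod_type]
    rw [Finset.sum_congr rfl (fun i _ => hrow i)]
    rw [Finset.sum_const, nsmul_eq_mul, Finset.card_univ, Fintype.card_fin]
    field_simp
  obtain ⟨π, hπd, hπq⟩ := exists_good_protocol h ν hν0 hν1
  set ε : Fin n → Fin n → ℝ := fun i j =>
    if j ∈ (ω i).1 then (1:ℝ)/(2*n*r) else -(1/(2*n*((n:ℝ)-r))) with hε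
  have hkey : ∑ i : Fin n, ∑ j : Fin n, (if π.eval i j then (1:ℝ) else -1) * ε i j
      = 2 * (∑ p : Fin n × Fin n, ν p * (if π.eval p.1 p.2 = sample ω p.1 p.2 then 1 else 0))
        - ∑ p : Fin n × Fin n, ν p := by
    rw [Fintype.sum_prod_type, Fintype.sum_prod_type, Finset.mul_sum, ← Finset.sum_sub_distrib]
    apply Finset.sum_congr rfl
    intro i _
    rw [Finset.mul_sum, ← Finset.sum_sub_distrib]
    apply Finset.sum_congr rfl
    intro j _
    have hsamp : sample ω i j = decide (j ∈ (ω i).1) := rfl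
    have hνp : ν (i, j) = if j ∈ (ω i).1 then 1/(2*(n:ℝ)*r) else 1/(2*(n:ℝ)*((n:ℝ)-r)) := rfl
    have hεp : ε i j = if j ∈ (ω i).1 then (1:ℝ)/(2*n*r) else -(1/(2*n*((n:ℝ)-r))) := rfl
    by_cases hm : j ∈ (ω i).1 <;> by_cases he : π.eval i j = true <;>
      (rw [hνp, hεp, hsamp]; simp [hm, he]) <;> ring
  have h23 : (2:ℝ)/3 ≤ ∑ p : Fin n × Fin n, ν p * (if π.eval p.1 p.2 = sample ω p.1 p.2 then 1 else 0) := hπq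
  have h13 : (1:ℝ)/3 ≤ ∑ i : Fin n, ∑ j : Fin n, (if π.eval i j then (1:ℝ) else -1) * ε i j := by
    rw [hkey, hν1]; linarith
  set D : ℝ := Finset.univ.sup'
      (⟨(∅, ∅), Finset.mem_univ _⟩ : (Finset.univ : Finset (Finset (Fin n) × Finset (Fin n))).Nonempty)
      (fun AB => |∑ i ∈ AB.1, ∑ j ∈ AB.2, ε i j|) with hDdef
  have hD : ∀ A B : Finset (Fin n), |∑ i ∈ A, ∑ j ∈ B, ε i j| ≤ D :=
    fun A B => Finset.le_sup' (f := fun AB => |∑ i ∈ AB.1, ∑ j ∈ AB.2, ε i j|) (Finset.mem_univ (A, B))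
  have hdisc := protocol_disc ε D hD π Finset.univ Finset.univ
  have hD0 : 0 ≤ D := le_trans (abs_nonneg _) (hD ∅ ∅)
  have hpow : (2:ℝ) ^ π.depth ≤ 2 ^ w := pow_le_pow_right₀ one_le_two hπd
  have hDlb : 1/(3 * 2^w) ≤ D := by
    have h1 : (1:ℝ)/3 ≤ 2 ^ w * D := by
      calc (1:ℝ)/3 ≤ ∑ i : Fin n, ∑ j : Fin n, (if π.eval i j then (1:ℝ) else -1) * ε i j := h13
        _ ≤ |∑ i : Fin n, ∑ j : Fin n, (if π.eval i j then (1:ℝ) else -1) * ε i j| := le_abs_self _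
        _ ≤ 2 ^ π.depth * D := hdisc
        _ ≤ 2 ^ w * D := mul_le_mul_of_nonneg_right hpow hD0
    have h2 : (0:ℝ) < 2 ^ w := by positivity
    rw [div_le_iff₀ (by positivity)]
    calc (1:ℝ) = 3 * (1/3) := by norm_num
      _ ≤ 3 * (2 ^ w * D) := by linarith
      _ = D * (3 * 2 ^ w) := by ring
  obtain ⟨AB, _, hAB⟩ := Finset.exists_mem_eq_sup'
      (⟨(∅, ∅), Finset.mem_univ _⟩ : (Finset.univ : Finset (Finset (Fin n) × Finset (Fin n))).Nonempty)
      (fun AB => |∑ i ∈ AB.1, ∑ j ∈ AB.2, ε i j|)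
  refine ⟨AB.1, AB.2, ?_⟩
  rw [hDdef, hAB] at hDlb
  exact hDlb

lemma summable_ind {n : ℕ} (μ : PMF (Protocol n)) (p : Protocol n → Prop) [DecidablePred p] :
    Summable (fun π : Protocol n => if p π then (μ π).toReal else 0) := by
  apply (mass_summable μ).of_nonneg_of_le
  · intro π; split
    · exact ENNReal.toReal_nonneg
    · exact le_rfl
  · intro π; split
    · exact le_rfl
    · exact ENNReal.toReal_nonneg

lemma Rcc_zero_absurd {n : ℕ} (hn : 2 ≤ n) (ω : Omega n 1) : ¬ (Rcc (sample ω) ≤ 0) := by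
  intro h
  obtain ⟨μ, hdep, hsucc⟩ := Rcc_elim h
  have hn0 : 0 < n := by omega
  set i0 : Fin n := ⟨0, hn0⟩ with hi0
  obtain ⟨j1, hj1⟩ := Finset.card_pos.mp (by rw [(ω i0).2]; norm_num : 0 < (ω i0).1.card)
  obtain ⟨j2, hj2⟩ : ∃ j, j ∉ (ω i0).1 := by
    by_contra hall
    push_neg at hall
    have hsub : (Finset.univ : Finset (Fin n)) ⊆ (ω i0).1 := fun j _ => hall j
    have := Finset.card_le_card hsub
    rw [(ω i0).2, Finset.card_univ, Fintype.card_fin] at this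
    omega
  have hleaf : ∀ π ∈ μ.support, ∀ (i j i' j' : Fin n), π.eval i j = π.eval i' j' := by
    intro π hπ
    have hd := hdep π hπ
    cases π with
    | leaf b => intros; rfl
    | node p f l r => simp [Protocol.depth] at hd
  have h1 := hsucc i0 j1
  have h2 := hsucc i0 j2
  rw [succProb_eq] at h1 h2
  have hs1 : sample ω i0 j1 = true := by simp [sample, hj1]
  have hs2 : sample ω i0 j2 = false := by simp [sample, hj2]
  have hpt : ∀ π : Protocol n,
      (if π.eval i0 j1 = sample ω i0 j1 then (μ π).toReal else 0)
        + (if π.eval i0 j2 = sample ω i0 j2 then (μ π).toReal else 0) ≤ (μ π).toReal := by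
    intro π
    by_cases hπ : π ∈ μ.support
    · have he := hleaf π hπ i0 j1 i0 j2
      rw [hs1, hs2]
      by_cases hb : π.eval i0 j1 = true
      · rw [if_pos hb, if_neg (by rw [← he, hb]; simp)]
        simp
      · rw [if_neg hb, if_pos (by rw [← he]; simpa using hb)]
        simp
    · have : μ π = 0 := by rwa [PMF.mem_support_iff, not_not] at hπ
      simp [this]
  have hsum : ∑' π : Protocol n,
      ((if π.eval i0 j1 = sample ω i0 j1 then (μ π).toReal else 0)
        + (if π.eval i0 j2 = sample ω i0 j2 then (μ π).toReal else 0)) ≤ 1 := by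
    calc ∑' π : Protocol n, ((if π.eval i0 j1 = sample ω i0 j1 then (μ π).toReal else 0)
          + (if π.eval i0 j2 = sample ω i0 j2 then (μ π).toReal else 0))
        ≤ ∑' π : Protocol n, (μ π).toReal := by
          apply Summable.tsum_le_tsum hpt _ (mass_summable μ)
          exact Summable.add (summable_ind μ _) (summable_ind μ _)
      _ = 1 := mass_tsum μ
  rw [Summable.tsum_add (summable_ind μ _) (summable_ind μ _)] at hsum
  linarith


lemma row_mgf {n r : ℕ} (B : Finset (Fin n)) (β : ℝ) :
    ∑ s : {s : Finset (Fin n) // s.card = r},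
        Real.exp (β * (((s.1 ∩ B).card : ℝ) - r * B.card / n))
      ≤ (n.choose r : ℝ) * Real.exp (β ^ 2 * r / 8) := by
  have h := hg_mgf β r Finset.univ B (Finset.subset_univ B)
  rw [Finset.card_univ, Fintype.card_fin] at h
  have e : ∑ s ∈ Finset.univ.powersetCard r,
        Real.exp (β * (((s ∩ B).card : ℝ) - r * B.card / n))
      = ∑ s : {s : Finset (Fin n) // s.card = r},
        Real.exp (β * (((s.1 ∩ B).card : ℝ) - r * B.card / n)) :=
    Finset.sum_subtype _ (fun s => Finset.mem_powersetCard_univ) _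
  rw [← e]
  exact h

lemma card_omega (n r : ℕ) : Fintype.card (Omega n r) = (n.choose r) ^ n := by
  rw [Fintype.card_fun, Fintype.card_finset_len, Fintype.card_fin]

/-- Chernoff counting bound for one signed rectangle event. -/
lemma event_count {n r : ℕ} (hrn : r ≤ n) (A : Finset (Fin n)) (B : Finset (Fin n))
    (σ cst t lam : ℝ) (hσ : σ = 1 ∨ σ = -1) (hlam : 0 ≤ lam)
    (g : {s : Finset (Fin n) // s.card = r} → ℝ)
    (hg : ∀ s, g s = cst * (((s.1 ∩ B).card : ℝ) - r * B.card / n)) :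
    (Nat.card {ω : Omega n r // t ≤ σ * ∑ i ∈ A, g (ω i)} : ℝ)
      ≤ ((n.choose r : ℝ)) ^ n * Real.exp (-(lam*t) + lam^2 * cst^2 * r * n / 8) := by
  classical
  have hcount : (Nat.card {ω : Omega n r // t ≤ σ * ∑ i ∈ A, g (ω i)} : ℕ)
      = (Finset.univ.filter (fun ω : Omega n r => t ≤ σ * ∑ i ∈ A, g (ω i))).card := by
    rw [Nat.card_eq_fintype_card, Fintype.card_subtype]
  rw [hcount]
  have step1 : ((Finset.univ.filter (fun ω : Omega n r => t ≤ σ * ∑ i ∈ A, g (ω i))).card : ℝ)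
      ≤ ∑ ω : Omega n r, Real.exp (lam * (σ * ∑ i ∈ A, g (ω i) - t)) := by
    rw [Finset.card_eq_sum_ones, Nat.cast_sum]
    calc ∑ ω ∈ Finset.univ.filter (fun ω : Omega n r => t ≤ σ * ∑ i ∈ A, g (ω i)), ((1:ℕ):ℝ)
        ≤ ∑ ω ∈ Finset.univ.filter (fun ω : Omega n r => t ≤ σ * ∑ i ∈ A, g (ω i)),
            Real.exp (lam * (σ * ∑ i ∈ A, g (ω i) - t)) := by
          apply Finset.sum_le_sum
          intro ω hω
          rw [Finset.mem_filter] at hω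
          rw [Nat.cast_one]
          apply Real.one_le_exp
          have := hω.2
          nlinarith
      _ ≤ ∑ ω : Omega n r, Real.exp (lam * (σ * ∑ i ∈ A, g (ω i) - t)) := by
          apply Finset.sum_le_sum_of_subset_of_nonneg (Finset.filter_subset _ _)
          intro ω _ _
          positivity
  have step2 : ∑ ω : Omega n r, Real.exp (lam * (σ * ∑ i ∈ A, g (ω i) - t))
      = Real.exp (-(lam*t)) * ∑ ω : Omega n r,
          ∏ i : Fin n, (if i ∈ A then Real.exp (lam * σ * g (ω i)) else 1) := by
    rw [Finset.mul_sum]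
    apply Finset.sum_congr rfl
    intro ω _
    have e1 : lam * (σ * ∑ i ∈ A, g (ω i) - t)
        = -(lam*t) + ∑ i ∈ A, lam * σ * g (ω i) := by
      rw [← Finset.mul_sum]
      ring
    rw [e1, Real.exp_add, Real.exp_sum,
      Finset.prod_ite_mem Finset.univ A (fun i => Real.exp (lam * σ * g (ω i))),
      Finset.univ_inter]
  have step3 : ∑ ω : Omega n r,
        ∏ i : Fin n, (if i ∈ A then Real.exp (lam * σ * g (ω i)) else 1)
      = ∏ i : Fin n, ∑ s : {s : Finset (Fin n) // s.card = r},
          (if i ∈ A then Real.exp (lam * σ * g s) else 1) :=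
    (Fintype.prod_sum (fun i s => if i ∈ A then Real.exp (lam * σ * g s) else 1)).symm
  have hσ2 : σ ^ 2 = 1 := by rcases hσ with h | h <;> rw [h] <;> norm_num
  have hV0 : 0 ≤ lam^2 * cst^2 * r / 8 := by positivity
  have hC1 : (1:ℝ) ≤ (n.choose r : ℝ) := by
    exact_mod_cast Nat.one_le_iff_ne_zero.mpr (Nat.choose_pos hrn).ne'
  have hfac : ∀ i : Fin n, ∑ s : {s : Finset (Fin n) // s.card = r},
        (if i ∈ A then Real.exp (lam * σ * g s) else 1)
      ≤ (n.choose r : ℝ) * Real.exp (lam^2 * cst^2 * r / 8) := by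
    intro i
    by_cases hi : i ∈ A
    · simp only [if_pos hi]
      have e2 : ∀ s : {s : Finset (Fin n) // s.card = r},
          Real.exp (lam * σ * g s)
            = Real.exp ((lam * σ * cst) * (((s.1 ∩ B).card : ℝ) - r * B.card / n)) := by
        intro s
        rw [hg s]
        ring_nf
      rw [Finset.sum_congr rfl (fun s _ => e2 s)]
      have := row_mgf (r := r) B (lam * σ * cst)
      have e3 : (lam * σ * cst)^2 = lam^2 * cst^2 := by
        rw [mul_pow, mul_pow, hσ2]
        ring
      rwa [e3] at this
    · simp only [if_neg hi]
      rw [Finset.sum_const, nsmul_eq_mul, mul_one, Finset.card_univ, Fintype.card_finset_len,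
        Fintype.card_fin]
      calc (n.choose r : ℝ) = (n.choose r : ℝ) * 1 := (mul_one _).symm
        _ ≤ (n.choose r : ℝ) * Real.exp (lam^2 * cst^2 * r / 8) := by
            apply mul_le_mul_of_nonneg_left (Real.one_le_exp hV0) (by linarith)
  have step4 : ∏ i : Fin n, ∑ s : {s : Finset (Fin n) // s.card = r},
        (if i ∈ A then Real.exp (lam * σ * g s) else 1)
      ≤ ((n.choose r : ℝ) * Real.exp (lam^2 * cst^2 * r / 8)) ^ n := by
    calc ∏ i : Fin n, ∑ s : {s : Finset (Fin n) // s.card = r},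
          (if i ∈ A then Real.exp (lam * σ * g s) else 1)
        ≤ ∏ _i : Fin n, ((n.choose r : ℝ) * Real.exp (lam^2 * cst^2 * r / 8)) := by
          apply Finset.prod_le_prod
          · intro i _
            apply Finset.sum_nonneg
            intro s _
            split
            · positivity
            · norm_num
          · exact fun i _ => hfac i
      _ = ((n.choose r : ℝ) * Real.exp (lam^2 * cst^2 * r / 8)) ^ n := by
          rw [Finset.prod_const, Finset.card_univ, Fintype.card_fin]
  calc ((Finset.univ.filter (fun ω : Omega n r => t ≤ σ * ∑ i ∈ A, g (ω i))).card : ℝ)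
      ≤ ∑ ω : Omega n r, Real.exp (lam * (σ * ∑ i ∈ A, g (ω i) - t)) := step1
    _ = Real.exp (-(lam*t)) * ∑ ω : Omega n r,
          ∏ i : Fin n, (if i ∈ A then Real.exp (lam * σ * g (ω i)) else 1) := step2
    _ = Real.exp (-(lam*t)) * ∏ i : Fin n, ∑ s : {s : Finset (Fin n) // s.card = r},
          (if i ∈ A then Real.exp (lam * σ * g s) else 1) := by rw [step3]
    _ ≤ Real.exp (-(lam*t)) * ((n.choose r : ℝ) * Real.exp (lam^2 * cst^2 * r / 8)) ^ n := by
        apply mul_le_mul_of_nonneg_left step4 (Real.exp_pos _).le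
    _ = ((n.choose r : ℝ)) ^ n * Real.exp (-(lam*t) + lam^2 * cst^2 * r * n / 8) := by
        rw [mul_pow, ← Real.exp_nat_mul, Real.exp_add]
        ring_nf

lemma eps_row_sum {n r : ℕ} (hr1 : 1 ≤ r) (hrn : r < n) (B : Finset (Fin n))
    (s : {s : Finset (Fin n) // s.card = r}) :
    ∑ j ∈ B, (if j ∈ s.1 then (1:ℝ)/(2*n*r) else -(1/(2*n*((n:ℝ)-r))))
      = (1/(2*(r:ℝ)*((n:ℝ)-r))) * (((s.1 ∩ B).card : ℝ) - r * B.card / n) := by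
  classical
  have hnR : (0:ℝ) < n := by exact_mod_cast (by omega : 0 < n)
  have hrR : (0:ℝ) < r := by exact_mod_cast hr1
  have hnrR : (0:ℝ) < (n:ℝ) - r := by
    have : (r:ℝ) < n := by exact_mod_cast hrn
    linarith
  rw [← Finset.sum_filter_add_sum_filter_not B (fun j => j ∈ s.1)]
  rw [Finset.sum_congr rfl (fun j hj => if_pos (Finset.mem_filter.mp hj).2),
    Finset.sum_congr rfl (fun j hj => if_neg (Finset.mem_filter.mp hj).2)]
  rw [Finset.sum_const, Finset.sum_const, nsmul_eq_mul, nsmul_eq_mul]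
  rw [Finset.filter_mem_eq_inter, ← Finset.sdiff_eq_filter]
  have hcards : ((B \ s.1).card : ℝ) = (B.card : ℝ) - ((B ∩ s.1).card : ℝ) := by
    have := Finset.card_sdiff_add_card_inter B s.1
    have := congrArg (fun k : ℕ => (k : ℝ)) this
    push_cast at this
    linarith
  rw [hcards]
  rw [show (s.1 ∩ B) = (B ∩ s.1) from Finset.inter_comm _ _]
  field_simp
  ring

lemma rect_prob {n r : ℕ} (hr1 : 1 ≤ r) (hrn : r < n) (A B : Finset (Fin n)) (σ : ℝ)
    (hσ : σ = 1 ∨ σ = -1) (t : ℝ) (ht : 0 < t) :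
    prob n r (fun ω => t ≤ σ * ∑ i ∈ A, ∑ j ∈ B,
        (if j ∈ (ω i).1 then (1:ℝ)/(2*n*r) else -(1/(2*n*((n:ℝ)-r)))))
      ≤ Real.exp (-(8 * t^2 * r * ((n:ℝ)-r)^2 / n)) := by
  have hnR : (0:ℝ) < n := by exact_mod_cast (by omega : 0 < n)
  have hrR : (0:ℝ) < r := by exact_mod_cast hr1
  have hnrR : (0:ℝ) < (n:ℝ) - r := by
    have : (r:ℝ) < n := by exact_mod_cast hrn
    linarith
  have hcst : (0:ℝ) < 1/(2*(r:ℝ)*((n:ℝ)-r)) := by positivity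
  set cst : ℝ := 1/(2*(r:ℝ)*((n:ℝ)-r)) with hcstdef
  set lam : ℝ := 4*t/(cst^2*r*n) with hlamdef
  have hlam0 : 0 ≤ lam := by
    rw [hlamdef]
    positivity
  have hev : ∀ ω : Omega n r, (∑ i ∈ A, ∑ j ∈ B,
      (if j ∈ (ω i).1 then (1:ℝ)/(2*n*r) else -(1/(2*n*((n:ℝ)-r)))))
      = ∑ i ∈ A, cst * (((( (ω i).1 ∩ B).card : ℝ)) - r * B.card / n) := by
    intro ω
    exact Finset.sum_congr rfl (fun i _ => eps_row_sum hr1 hrn B (ω i))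
  have hec := event_count (le_of_lt hrn) A B σ cst t lam hσ hlam0
    (fun s => cst * (((s.1 ∩ B).card : ℝ) - r * B.card / n)) (fun s => rfl)
  unfold prob
  rw [div_le_iff₀ (by
    rw [card_omega]
    have := Nat.choose_pos (le_of_lt hrn)
    positivity)]
  have heq : (fun ω : Omega n r => t ≤ σ * ∑ i ∈ A, ∑ j ∈ B,
      (if j ∈ (ω i).1 then (1:ℝ)/(2*n*r) else -(1/(2*n*((n:ℝ)-r)))))
      = (fun ω : Omega n r => t ≤ σ * ∑ i ∈ A,
          cst * (((( (ω i).1 ∩ B).card : ℝ)) - r * B.card / n)) := by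
    funext ω
    rw [hev ω]
  rw [heq]
  calc (Nat.card {ω : Omega n r // t ≤ σ * ∑ i ∈ A,
          cst * (((( (ω i).1 ∩ B).card : ℝ)) - r * B.card / n)} : ℝ)
      ≤ ((n.choose r : ℝ)) ^ n * Real.exp (-(lam*t) + lam^2 * cst^2 * r * n / 8) := hec
    _ = Real.exp (-(8 * t^2 * r * ((n:ℝ)-r)^2 / n)) * (Fintype.card (Omega n r)) := by
        rw [card_omega]
        push_cast
        rw [mul_comm]
        congr 1
        have e1 : -(lam*t) + lam^2 * cst^2 * r * n / 8 = -(2*t^2/(cst^2*r*n)) := by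
          rw [hlamdef]
          have h1 : cst^2*r*(n:ℝ) ≠ 0 := by positivity
          field_simp
          ring
        rw [e1]
        congr 1
        rw [hcstdef]
        have h2 : ((2:ℝ)*r*((n:ℝ)-r)) ≠ 0 := by positivity
        field_simp
        ring

lemma ncard_filter {n r : ℕ} (P : Omega n r → Prop) [DecidablePred P] :
    Nat.card {ω : Omega n r // P ω} = (Finset.univ.filter P).card := by
  rw [Nat.card_eq_fintype_card, Fintype.card_subtype]

lemma prob_mono {n r : ℕ} (P Q : Omega n r → Prop) (h : ∀ ω, P ω → Q ω) :
    prob n r P ≤ prob n r Q := by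
  classical
  unfold prob
  by_cases hc : ((Fintype.card (Omega n r) : ℝ)) = 0
  · rw [hc, div_zero, div_zero]
  · have hpos : (0:ℝ) < (Fintype.card (Omega n r) : ℝ) :=
      lt_of_le_of_ne (Nat.cast_nonneg _) (Ne.symm hc)
    apply (div_le_div_iff_of_pos_right hpos).mpr
    have hle : Nat.card {ω : Omega n r // P ω} ≤ Nat.card {ω : Omega n r // Q ω} := by
      rw [ncard_filter, ncard_filter]
      apply Finset.card_le_card
      intro ω hω
      rw [Finset.mem_filter] at hω ⊢
      exact ⟨hω.1, h ω hω.2⟩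
    exact_mod_cast hle

lemma exists_rect_prob {n r : ℕ} (hr1 : 1 ≤ r) (hrn : r < n) (t : ℝ) (ht : 0 < t) :
    prob n r (fun ω => ∃ A B : Finset (Fin n), t ≤ |∑ i ∈ A, ∑ j ∈ B,
        (if j ∈ (ω i).1 then (1:ℝ)/(2*n*r) else -(1/(2*n*((n:ℝ)-r))))|)
      ≤ 4^n * (2 * Real.exp (-(8 * t^2 * r * ((n:ℝ)-r)^2 / n))) := by
  classical
  have hcard : (0:ℝ) < (Fintype.card (Omega n r) : ℝ) := by
    rw [card_omega]
    have := Nat.choose_pos (le_of_lt hrn)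
    positivity
  set S : Finset (Fin n) → Finset (Fin n) → Omega n r → ℝ := fun A B ω => ∑ i ∈ A, ∑ j ∈ B,
      (if j ∈ (ω i).1 then (1:ℝ)/(2*n*r) else -(1/(2*n*((n:ℝ)-r)))) with hS
  have hsub : Finset.univ.filter (fun ω : Omega n r => ∃ A B, t ≤ |S A B ω|)
      ⊆ (Finset.univ : Finset (Finset (Fin n) × Finset (Fin n))).biUnion
          (fun AB => Finset.univ.filter (fun ω : Omega n r => t ≤ 1 * S AB.1 AB.2 ω)
            ∪ Finset.univ.filter (fun ω : Omega n r => t ≤ (-1) * S AB.1 AB.2 ω)) := by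
    intro ω hω
    rw [Finset.mem_filter] at hω
    obtain ⟨A, B, hAB⟩ := hω.2
    rw [Finset.mem_biUnion]
    refine ⟨(A, B), Finset.mem_univ _, ?_⟩
    rw [Finset.mem_union, Finset.mem_filter, Finset.mem_filter]
    rcases le_abs.mp hAB with h | h
    · left; exact ⟨Finset.mem_univ _, by rw [one_mul]; exact h⟩
    · right; exact ⟨Finset.mem_univ _, by rw [neg_one_mul]; exact h⟩
  have hcount : ((Finset.univ.filter (fun ω : Omega n r => ∃ A B, t ≤ |S A B ω|)).card : ℝ)
      ≤ ∑ AB : Finset (Fin n) × Finset (Fin n),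
          (((Finset.univ.filter (fun ω : Omega n r => t ≤ 1 * S AB.1 AB.2 ω)).card : ℝ)
            + ((Finset.univ.filter (fun ω : Omega n r => t ≤ (-1) * S AB.1 AB.2 ω)).card : ℝ)) := by
    calc ((Finset.univ.filter (fun ω : Omega n r => ∃ A B, t ≤ |S A B ω|)).card : ℝ)
        ≤ (((Finset.univ : Finset (Finset (Fin n) × Finset (Fin n))).biUnion
            (fun AB => Finset.univ.filter (fun ω : Omega n r => t ≤ 1 * S AB.1 AB.2 ω)
              ∪ Finset.univ.filter (fun ω : Omega n r => t ≤ (-1) * S AB.1 AB.2 ω))).card : ℝ) := by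
          exact_mod_cast Finset.card_le_card hsub
      _ ≤ ∑ AB : Finset (Fin n) × Finset (Fin n),
            (((Finset.univ.filter (fun ω : Omega n r => t ≤ 1 * S AB.1 AB.2 ω)
              ∪ Finset.univ.filter (fun ω : Omega n r => t ≤ (-1) * S AB.1 AB.2 ω))).card : ℝ) := by
          exact_mod_cast Finset.card_biUnion_le
      _ ≤ _ := by
          apply Finset.sum_le_sum
          intro AB _
          exact_mod_cast Finset.card_union_le _ _
  -- now bound each term by rect_prob
  have hterm : ∀ AB : Finset (Fin n) × Finset (Fin n), ∀ σ : ℝ, σ = 1 ∨ σ = -1 →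
      ((Finset.univ.filter (fun ω : Omega n r => t ≤ σ * S AB.1 AB.2 ω)).card : ℝ)
        ≤ Real.exp (-(8 * t^2 * r * ((n:ℝ)-r)^2 / n)) * (Fintype.card (Omega n r) : ℝ) := by
    intro AB σ hσ
    have := rect_prob hr1 hrn AB.1 AB.2 σ hσ t ht
    unfold prob at this
    rw [div_le_iff₀ hcard] at this
    calc ((Finset.univ.filter (fun ω : Omega n r => t ≤ σ * S AB.1 AB.2 ω)).card : ℝ)
        = (Nat.card {ω : Omega n r // t ≤ σ * S AB.1 AB.2 ω} : ℝ) := by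
          rw [ncard_filter]
      _ ≤ _ := this
  unfold prob
  rw [div_le_iff₀ hcard, ncard_filter]
  calc ((Finset.univ.filter (fun ω : Omega n r => ∃ A B, t ≤ |S A B ω|)).card : ℝ)
      ≤ ∑ AB : Finset (Fin n) × Finset (Fin n),
          (((Finset.univ.filter (fun ω : Omega n r => t ≤ 1 * S AB.1 AB.2 ω)).card : ℝ)
            + ((Finset.univ.filter (fun ω : Omega n r => t ≤ (-1) * S AB.1 AB.2 ω)).card : ℝ)) := hcount
    _ ≤ ∑ _AB : Finset (Fin n) × Finset (Fin n),
          (2 * Real.exp (-(8 * t^2 * r * ((n:ℝ)-r)^2 / n)) * (Fintype.card (Omega n r) : ℝ)) := by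
        apply Finset.sum_le_sum
        intro AB _
        have h1 := hterm AB 1 (Or.inl rfl)
        have h2 := hterm AB (-1) (Or.inr rfl)
        linarith
    _ = 4^n * (2 * Real.exp (-(8 * t^2 * r * ((n:ℝ)-r)^2 / n))) * (Fintype.card (Omega n r) : ℝ) := by
        rw [Finset.sum_const, Finset.card_univ, Fintype.card_prod, Fintype.card_finset,
          Fintype.card_fin, nsmul_eq_mul]
        rw [show (4:ℝ)^n = ((2:ℝ)^n)^2 by rw [← pow_mul]; rw [show n*2 = 2*n by ring, pow_mul]; norm_num]
        push_cast
        ring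


set_option maxHeartbeats 1000000 in
/-- For a random `n × n` Boolean matrix whose rows are independent uniform
`r`-subsets of `[n]` with `r = 2^(3w)` and `w ≤ 10⁻³·log₂ n`, for all sufficiently
large `n` the probability that the (public-coin, error `1/3`) randomized communication
complexity of the matrix is at most `w` is at most `1/10`. -/
theorem random_matrix_large_Rcc :
    ∃ N : ℕ, ∀ n : ℕ, N ≤ n → ∀ w : ℕ, (w : ℝ) ≤ (1 / 1000) * Real.logb 2 n →
      prob n (2 ^ (3 * w)) (fun ω => Rcc (sample ω) ≤ w) ≤ 1 / 10 := by
  use 1000000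
  intro n hn w hw
  have hn2 : 2 ≤ n := by omega
  rcases Nat.eq_zero_or_pos w with hw0 | hw1
  · -- w = 0 : the event is empty
    subst hw0
    have hempty : IsEmpty {ω : Omega n (2 ^ (3 * 0)) // Rcc (sample ω) ≤ 0} := by
      constructor
      rintro ⟨ω, hω⟩
      exact Rcc_zero_absurd hn2 ω hω
    unfold prob
    rw [Nat.card_of_isEmpty]
    norm_num
  · -- main case
    set r : ℕ := 2 ^ (3 * w) with hrdef
    have hr1 : 1 ≤ r := Nat.one_le_two_pow
    have hn0 : 0 < n := by omega
    have hnR : (0:ℝ) < n := by exact_mod_cast hn0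
    have hlogb0 : 0 ≤ Real.logb 2 n :=
      Real.logb_nonneg one_lt_two (by exact_mod_cast hn0)
    have hrR : (r:ℝ) = (2:ℝ) ^ ((3*w : ℕ):ℝ) := by
      rw [Real.rpow_natCast]
      rw [hrdef]
      push_cast
      ring
    have hexp : ((3*w : ℕ):ℝ) ≤ (1/2) * Real.logb 2 n := by
      push_cast
      nlinarith [hw, hlogb0]
    have hru : (r:ℝ) ≤ (n:ℝ) ^ ((1:ℝ)/2) := by
      rw [hrR]
      calc (2:ℝ) ^ ((3*w:ℕ):ℝ) ≤ (2:ℝ) ^ ((1/2) * Real.logb 2 n) :=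
            Real.rpow_le_rpow_of_exponent_le one_le_two hexp
        _ = ((2:ℝ) ^ (Real.logb 2 n)) ^ ((1:ℝ)/2) := by
            rw [mul_comm, Real.rpow_mul (by norm_num : (0:ℝ) ≤ 2)]
        _ = (n:ℝ) ^ ((1:ℝ)/2) := by
            rw [Real.rpow_logb (by norm_num) (by norm_num) hnR]
    have hu0 : 0 ≤ (n:ℝ) ^ ((1:ℝ)/2) := Real.rpow_nonneg hnR.le _
    have hu2 : ((n:ℝ) ^ ((1:ℝ)/2))^2 = n := by
      rw [← Real.rpow_natCast ((n:ℝ)^((1:ℝ)/2)) 2, ← Real.rpow_mul hnR.le]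
      norm_num
    have hn100 : (100:ℝ) ≤ n := by exact_mod_cast (by omega : 100 ≤ n)
    have hu10 : 10 ≤ (n:ℝ) ^ ((1:ℝ)/2) := by nlinarith
    have hr10 : (r:ℝ) ≤ (n:ℝ)/10 := by nlinarith
    have hrn : r < n := by
      have : (r:ℝ) < n := by nlinarith
      exact_mod_cast this
    set t : ℝ := 1/(3 * 2^w) with ht_def
    have ht : 0 < t := by rw [ht_def]; positivity
    have hmono := prob_mono (n := n) (r := r)
      (fun ω => Rcc (sample ω) ≤ w)
      (fun ω => ∃ A B : Finset (Fin n), t ≤ |∑ i ∈ A, ∑ j ∈ B,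
        (if j ∈ (ω i).1 then (1:ℝ)/(2*n*r) else -(1/(2*n*((n:ℝ)-r))))|)
      (fun ω h => disc_of_Rcc hr1 hrn ω h)
    have hrect := exists_rect_prob (n := n) (r := r) hr1 hrn t ht
    have hx2 : (2:ℝ) ≤ (2:ℝ)^w := by
      calc (2:ℝ) = 2^1 := (pow_one 2).symm
        _ ≤ 2^w := pow_le_pow_right₀ one_le_two hw1
    have hx0 : (0:ℝ) < (2:ℝ)^w := by positivity
    have hrx : (r:ℝ) = ((2:ℝ)^w)^3 := by
      rw [hrdef]
      push_cast
      rw [← pow_mul, Nat.mul_comm]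
    have htr : t^2 * (r:ℝ) = (2:ℝ)^w/9 := by
      rw [ht_def, hrx]
      field_simp
      ring
    have hnr9 : (9:ℝ)/10 * n ≤ (n:ℝ) - r := by linarith
    have hnr0 : (0:ℝ) ≤ (n:ℝ) - r := by linarith
    have hX : (36:ℝ)/25 * n ≤ 8 * t^2 * r * ((n:ℝ)-r)^2 / n := by
      rw [le_div_iff₀ hnR]
      have h1 : ((9:ℝ)/10*n)^2 ≤ ((n:ℝ)-r)^2 := by nlinarith
      calc (36:ℝ)/25*n*n = 8*(2/9)*(((9:ℝ)/10*n)^2) := by ring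
        _ ≤ 8*((2:ℝ)^w/9)*(((9:ℝ)/10*n)^2) := by nlinarith [sq_nonneg ((9:ℝ)/10*n)]
        _ ≤ 8*((2:ℝ)^w/9)*(((n:ℝ)-r)^2) :=
            mul_le_mul_of_nonneg_left h1 (by positivity)
        _ = 8*(t^2*(r:ℝ))*((n:ℝ)-r)^2 := by rw [htr]
        _ = 8*t^2*(r:ℝ)*((n:ℝ)-r)^2 := by ring
    have hlog4 : Real.log 4 ≤ (139:ℝ)/100 := by
      have h2 : Real.log 2 < 0.6931471808 := Real.log_two_lt_d9
      have h4 : Real.log 4 = 2 * Real.log 2 := by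
        rw [show (4:ℝ) = 2^2 by norm_num, Real.log_pow]
        push_cast
        ring
      linarith
    have h4n : (4:ℝ)^n = Real.exp (n * Real.log 4) := by
      rw [Real.exp_nat_mul, Real.exp_log (by norm_num : (0:ℝ) < 4)]
    have hnbig : (1000000:ℝ) ≤ n := by exact_mod_cast hn
    have hbig : (20:ℝ) ≤ Real.exp ((1/20)*(n:ℝ)) := by
      have h1 := Real.add_one_le_exp ((1/20)*(n:ℝ))
      nlinarith
    have hsmall : Real.exp (-((1/20)*(n:ℝ))) ≤ 1/20 := by
      rw [Real.exp_neg]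
      rw [inv_le_comm₀ (Real.exp_pos _) (by norm_num)]
      calc ((1:ℝ)/20)⁻¹ = 20 := by norm_num
        _ ≤ Real.exp ((1/20)*(n:ℝ)) := hbig
    calc prob n r (fun ω => Rcc (sample ω) ≤ w)
        ≤ prob n r (fun ω => ∃ A B : Finset (Fin n), t ≤ |∑ i ∈ A, ∑ j ∈ B,
            (if j ∈ (ω i).1 then (1:ℝ)/(2*n*r) else -(1/(2*n*((n:ℝ)-r))))|) := hmono
      _ ≤ 4^n * (2 * Real.exp (-(8 * t^2 * r * ((n:ℝ)-r)^2 / n))) := hrect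
      _ ≤ 4^n * (2 * Real.exp (-((36:ℝ)/25 * n))) := by
          apply mul_le_mul_of_nonneg_left _ (by positivity)
          apply mul_le_mul_of_nonneg_left _ (by norm_num)
          apply Real.exp_le_exp.mpr
          linarith
      _ = 2 * Real.exp ((n:ℝ) * Real.log 4 + -((36:ℝ)/25 * n)) := by
          rw [h4n, Real.exp_add]
          ring
      _ ≤ 2 * Real.exp (-((1/20)*(n:ℝ))) := by
          apply mul_le_mul_of_nonneg_left _ (by norm_num)
          apply Real.exp_le_exp.mpr
          nlinarith
      _ ≤ 2 * (1/20) := by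
          apply mul_le_mul_of_nonneg_left hsmall (by norm_num)
      _ = 1/10 := by norm_num
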